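/- arXiv:2301.06827 — 5 statements merged into one kernel-verified Lean document; each statement's English description precedes it below -/
import Mathlib

section
/- Let X be a real normed space and I an ideal on ℕ. A sequence (xₙ) in X is weak I^I-Cauchy if and only if it is weak I-Cauchy. -/
open NormedSpace Classical

/-- `I` is an ideal of subsets of `ℕ`: closed under finite unions and subsets. -/
def IsIdeal (I : Set (Set ℕ)) : Prop :=
  (∀ A ∈ I, ∀ B ∈ I, A ∪ B ∈ I) ∧ (∀ A ∈ I, ∀ B, B ⊆ A → B ∈ I)

/-- The restriction `K|_M = {A ∩ M : A ∈ K}` of an ideal `K` to a set `M ⊆ ℕ`. -/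
def restrictIdeal (K : Set (Set ℕ)) (M : Set ℕ) : Set (Set ℕ) :=
  {A | ∃ B ∈ K, A = B ∩ M}

/-- A sequence `x` in a normed space is weak `I`-Cauchy. -/
def WeakICauchy {X : Type*} [NormedAddCommGroup X] [NormedSpace ℝ X]
    (I : Set (Set ℕ)) (x : ℕ → X) : Prop :=
  ∀ f : StrongDual ℝ X, ∀ ε > (0 : ℝ), ∃ N : ℕ, {n : ℕ | ε ≤ |f (x n) - f (x N)|} ∈ I

/-- The sequence `x` restricted to `M` is weak `K|_M`-Cauchy. -/
def WeakCauchyOn {X : Type*} [NormedAddCommGroup X] [NormedSpace ℝ X]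
    (K : Set (Set ℕ)) (M : Set ℕ) (x : ℕ → X) : Prop :=
  ∀ f : StrongDual ℝ X, ∀ ε > (0 : ℝ), ∃ N ∈ M,
    {n ∈ M | ε ≤ |f (x n) - f (x N)|} ∈ restrictIdeal K M

/-- A sequence `x` is weak `I^K`-Cauchy: there is `M ∈ F(I)` (i.e. `Mᶜ ∈ I`)
such that `x` restricted to `M` is weak `K|_M`-Cauchy. -/
def WeakIKCauchy {X : Type*} [NormedAddCommGroup X] [NormedSpace ℝ X]
    (I K : Set (Set ℕ)) (x : ℕ → X) : Prop :=
  ∃ M : Set ℕ, Mᶜ ∈ I ∧ WeakCauchyOn K M x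

/-- A sequence `x` is weakly `I`-convergent to `l`. -/
def WeakIConv {X : Type*} [NormedAddCommGroup X] [NormedSpace ℝ X]
    (I : Set (Set ℕ)) (x : ℕ → X) (l : X) : Prop :=
  ∀ f : StrongDual ℝ X, ∀ ε > (0 : ℝ), {n : ℕ | ε ≤ |f (x n) - f l|} ∈ I

section WeakCauchy

variable {X : Type*} [NormedAddCommGroup X] [NormedSpace ℝ X] {I K : Set (Set ℕ)} {x : ℕ → X}

lemma restrictIdeal_univ {A : Set ℕ} (hA : A ∈ K) : A ∈ restrictIdeal K Set.univ :=
  ⟨A, hA, (Set.inter_univ A).symm⟩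

lemma WeakICauchy.weakCauchyOn_univ (h : WeakICauchy K x) : WeakCauchyOn K Set.univ x := by
  intro f ε hε
  obtain ⟨N, hN⟩ := h f ε hε
  refine ⟨N, trivial, ?_⟩
  simpa only [Set.mem_univ, true_and] using restrictIdeal_univ hN

/-- Testing against the zero functional exhibits `∅` as a member of `I`. -/
lemma WeakICauchy.empty_mem (h : WeakICauchy I x) : ∅ ∈ I := by
  obtain ⟨N, hN⟩ := h 0 1 one_pos
  simpa only [zero_apply, sub_self, abs_zero, not_le.mpr one_pos,
    Set.ofPred_false] using hN

lemma WeakICauchy.weakIKCauchy (hI : ∅ ∈ I) (h : WeakICauchy K x) : WeakIKCauchy I K x :=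
  ⟨Set.univ, by rwa [Set.compl_univ], h.weakCauchyOn_univ⟩

/-- Off `M` the exceptional set lies in `Mᶜ ∈ I`, and on `M` in some `B ∈ K ⊆ I`. -/
lemma WeakIKCauchy.weakICauchy (hI : IsIdeal I) (hKI : K ⊆ I) (h : WeakIKCauchy I K x) :
    WeakICauchy I x := by
  obtain ⟨M, hMc, hM⟩ := h
  intro f ε hε
  obtain ⟨N, -, B, hB, hBM⟩ := hM f ε hε
  refine ⟨N, hI.2 _ (hI.1 _ hMc _ (hKI hB)) _ fun n hn => ?_⟩
  by_cases hnM : n ∈ M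
  · have hn' : n ∈ {n ∈ M | ε ≤ |f (x n) - f (x N)|} := ⟨hnM, hn⟩
    rw [hBM] at hn'
    exact Or.inr hn'.1
  · exact Or.inl hnM

end WeakCauchy

theorem stmt6 {X : Type*} [NormedAddCommGroup X] [NormedSpace ℝ X]
    (I : Set (Set ℕ)) (hI : IsIdeal I) (x : ℕ → X) :
    WeakIKCauchy I I x ↔ WeakICauchy I x :=
  ⟨WeakIKCauchy.weakICauchy hI le_rfl, fun h => h.weakIKCauchy h.empty_mem⟩
end

section
/- Let X be a real normed space and I, K ideals on ℕ with K ⊆ I. If a sequence (xₙ) in X is weak I^K-Cauchy, then it is weak I-Cauchy. -/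
open NormedSpace Classical

theorem IsIdeal.mem_of_inter_mem_of_compl_mem {I : Set (Set ℕ)} (hI : IsIdeal I) {M A : Set ℕ}
    (hA : M ∩ A ∈ I) (hM : Mᶜ ∈ I) : A ∈ I :=
  -- `A ⊆ (M ∩ A) ∪ Mᶜ`
  hI.2 _ (hI.1 _ hA _ hM) _ fun n hn => (Classical.em (n ∈ M)).imp (fun hnM => ⟨hnM, hn⟩) id

theorem restrictIdeal_subset {I K : Set (Set ℕ)} (hI : IsIdeal I) (hsub : K ⊆ I) (M : Set ℕ) :
    restrictIdeal K M ⊆ I := by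
  rintro _ ⟨B, hB, rfl⟩
  exact hI.2 B (hsub hB) _ Set.inter_subset_left

theorem WeakCauchyOn.weakICauchy {X : Type*} [NormedAddCommGroup X] [NormedSpace ℝ X]
    {I K : Set (Set ℕ)} {M : Set ℕ} {x : ℕ → X} (hx : WeakCauchyOn K M x) (hI : IsIdeal I)
    (hKM : restrictIdeal K M ⊆ I) (hM : Mᶜ ∈ I) : WeakICauchy I x := by
  intro f ε hε
  obtain ⟨N, -, hN⟩ := hx f ε hε
  exact ⟨N, hI.mem_of_inter_mem_of_compl_mem (hKM hN) hM⟩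

theorem stmt7_general {X : Type*} [NormedAddCommGroup X] [NormedSpace ℝ X]
    (I K : Set (Set ℕ)) (hI : IsIdeal I) (hsub : K ⊆ I)
    (x : ℕ → X) (h : WeakIKCauchy I K x) : WeakICauchy I x := by
  obtain ⟨M, hM, hx⟩ := h
  exact hx.weakICauchy hI (restrictIdeal_subset hI hsub M) hM

theorem stmt7 {X : Type*} [NormedAddCommGroup X] [NormedSpace ℝ X]
    (I K : Set (Set ℕ)) (hI : IsIdeal I) (hK : IsIdeal K) (hsub : K ⊆ I)
    (x : ℕ → X) (h : WeakIKCauchy I K x) : WeakICauchy I x :=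
  stmt7_general I K hI hsub x h
end

section
/- Let X be a real normed space and I, K ideals on ℕ, and let I ∨ K = {A ∪ B : A ∈ I, B ∈ K} be the smallest ideal containing both I and K. A sequence (xₙ) in X is weak I^K-Cauchy if and only if it is weak (I ∨ K)^K-Cauchy. -/
open NormedSpace Classical

/-- The ideal `I ∨ K = {A ∪ B : A ∈ I, B ∈ K}`, the smallest ideal containing `I` and `K`. -/
def idealSup (I K : Set (Set ℕ)) : Set (Set ℕ) :=
  {C | ∃ A ∈ I, ∃ B ∈ K, C = A ∪ B}

/-! Since `I ⊆ I ∨ K`, only the converse needs an argument. If `Mᶜ = A ∪ B` with `A ∈ I` and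
`B ∈ K`, then `Aᶜ ∈ F(I)` contains `M` and `Aᶜ \ M ⊆ B`; adjoining to `M` a set from `K` keeps the
sequence weak `K|_M`-Cauchy, since each exceptional set grows by at most that set. -/

section

variable {X : Type*} [NormedAddCommGroup X] [NormedSpace ℝ X] {I K : Set (Set ℕ)}

theorem IsIdeal.empty_mem (hK : IsIdeal K) (hne : K.Nonempty) : ∅ ∈ K :=
  hne.elim fun B hB => hK.2 B hB ∅ (Set.empty_subset B)

theorem mem_idealSup_left (h0 : ∅ ∈ K) {A : Set ℕ} (hA : A ∈ I) : A ∈ idealSup I K :=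
  ⟨A, hA, ∅, h0, (Set.union_empty A).symm⟩

theorem mem_restrictIdeal_of_subset {M S : Set ℕ} (hS : S ∈ K) (hSM : S ⊆ M) :
    S ∈ restrictIdeal K M :=
  ⟨S, hS, (Set.inter_eq_left.2 hSM).symm⟩

theorem WeakCauchyOn.nonempty {M : Set ℕ} {x : ℕ → X} (h : WeakCauchyOn K M x) : K.Nonempty :=
  let ⟨_, _, B, hB, _⟩ := h 0 1 one_pos
  ⟨B, hB⟩

theorem WeakCauchyOn.mono_of_diff_mem (hK : IsIdeal K) {M M' : Set ℕ} {x : ℕ → X}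
    (h : WeakCauchyOn K M x) (hMM' : M ⊆ M') (hdiff : M' \ M ∈ K) : WeakCauchyOn K M' x := by
  intro f ε hε
  obtain ⟨N, hN, C, hC, hCM⟩ := h f ε hε
  have hsub : {n ∈ M' | ε ≤ |f (x n) - f (x N)|} ⊆ C ∪ M' \ M := by
    rintro n ⟨hnM', hnε⟩
    by_cases hnM : n ∈ M
    · have hn : n ∈ C ∩ M := hCM ▸ ⟨hnM, hnε⟩
      exact Or.inl hn.1
    · exact Or.inr ⟨hnM', hnM⟩
  exact ⟨N, hMM' hN, mem_restrictIdeal_of_subset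
    (hK.2 _ (hK.1 C hC _ hdiff) _ hsub) (Set.sep_subset _ _)⟩

end

theorem stmt8_general {X : Type*} [NormedAddCommGroup X] [NormedSpace ℝ X]
    (I K : Set (Set ℕ)) (hK : IsIdeal K) (x : ℕ → X) :
    WeakIKCauchy I K x ↔ WeakIKCauchy (idealSup I K) K x := by
  constructor
  · rintro ⟨M, hM, hC⟩
    exact ⟨M, mem_idealSup_left (hK.empty_mem hC.nonempty) hM, hC⟩
  · rintro ⟨M, ⟨A, hA, B, hB, hMAB⟩, hC⟩
    have hMA : M ⊆ Aᶜ := Set.subset_compl_comm.2 (hMAB ▸ Set.subset_union_left)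
    have hdiff : Aᶜ \ M ⊆ B := fun n ⟨hnA, hnM⟩ =>
      (hMAB ▸ hnM : n ∈ A ∪ B).resolve_left hnA
    exact ⟨Aᶜ, by rwa [compl_compl], hC.mono_of_diff_mem hK hMA (hK.2 B hB _ hdiff)⟩

theorem stmt8 {X : Type*} [NormedAddCommGroup X] [NormedSpace ℝ X]
    (I K : Set (Set ℕ)) (hI : IsIdeal I) (hK : IsIdeal K) (x : ℕ → X) :
    WeakIKCauchy I K x ↔ WeakIKCauchy (idealSup I K) K x :=
  stmt8_general I K hK x
end

section
/- Let X be a real normed space with X ≠ {0}, and let I, K be ideals on ℕ. Suppose that every weak I-Cauchy sequence in X is weak I^K-Cauchy. Then the condition AP(I,K) holds. -/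
open NormedSpace Classical

/-- The condition AP(I,K): for every sequence of pairwise disjoint sets in `I` there is a
sequence of sets in `I` whose symmetric differences with the given ones lie in `K` and
whose union lies in `I`. -/
def APCondition (I K : Set (Set ℕ)) : Prop :=
  ∀ A : ℕ → Set ℕ, (∀ n, A n ∈ I) → (∀ m n, m ≠ n → Disjoint (A m) (A n)) →
    ∃ B : ℕ → Set ℕ, (∀ n, B n ∈ I) ∧ (∀ n, symmDiff (A n) (B n) ∈ K) ∧ (⋃ n, B n) ∈ I

/-!
Given pairwise disjoint `Aₖ ∈ I`, put `gₙ = 1/(k+1)` for `n ∈ Aₖ` and `gₙ = 0` off `⋃ Aₖ`, and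
`xₙ = gₙ • v` for some `v ≠ 0`. Every set `{n : |gₙ| ≥ δ}` lies in a finite union of the `Aₖ`, so
`x` is weakly `I`-convergent to `0`, hence weak `I`-Cauchy (trivially if `ℕ ∈ I`), hence weak `I^K`-Cauchy on some
`M ∈ F(I)`. Each `Aₖ` is a level set of `g` isolated from the other values, so the `K|_M`-Cauchy
condition forces either `Aₖ ∩ M ∈ K` or `M ∖ Aₖ ∈ K`; by disjointness the first alternative
fails for at most one `k₀`. Taking `Bₖ = Aₖ ∖ M` when `Aₖ ∩ M ∈ K` and `Bₖ = Aₖ` otherwise gives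
`⋃ Bₖ ⊆ Mᶜ ∪ A_{k₀} ∈ I`.
-/

open Set Function

namespace IsIdeal

variable {I : Set (Set ℕ)}

lemma empty_mem_s10 (hI : IsIdeal I) {A : Set ℕ} (hA : A ∈ I) : ∅ ∈ I :=
  hI.2 A hA ∅ (empty_subset A)

lemma biUnion_finset_mem (hI : IsIdeal I) (h₀ : ∅ ∈ I) {A : ℕ → Set ℕ} (hA : ∀ n, A n ∈ I)
    (s : Finset ℕ) : (⋃ k ∈ s, A k) ∈ I := by
  induction s using Finset.induction with
  | empty => simpa using h₀
  | insert k s _ ih =>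
    rw [Finset.set_biUnion_insert]
    exact hI.1 _ (hA k) _ ih

lemma restrictIdeal_subset (hI : IsIdeal I) (M : Set ℕ) : restrictIdeal I M ⊆ I := by
  rintro _ ⟨B, hB, rfl⟩
  exact hI.2 B hB _ inter_subset_left

end IsIdeal

section WeakCauchy

variable {X : Type*} [NormedAddCommGroup X] [NormedSpace ℝ X] {I K : Set (Set ℕ)}

def RealCauchyOn (K : Set (Set ℕ)) (M : Set ℕ) (u : ℕ → ℝ) : Prop :=
  ∀ ε > (0 : ℝ), ∃ N ∈ M, {m ∈ M | ε ≤ |u m - u N|} ∈ restrictIdeal K M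

lemma WeakIConv.weakICauchy (hI : IsIdeal I) {x : ℕ → X} {l : X} (hx : WeakIConv I x l) :
    WeakICauchy I x := by
  intro f ε hε
  by_cases hU : univ ∈ I
  · exact ⟨0, hI.2 _ hU _ (subset_univ _)⟩
  have hS := hx f (ε / 2) (half_pos hε)
  obtain ⟨N, hN⟩ : ∃ N, N ∉ {n | ε / 2 ≤ |f (x n) - f l|} := by
    by_contra! hall
    exact hU (hI.2 _ hS _ fun n _ => hall n)
  refine ⟨N, hI.2 _ hS _ fun n hn => ?_⟩
  simp only [mem_ofPred_eq, not_le] at hn hN ⊢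
  by_contra! hn'
  have := abs_sub_le (f (x n)) (f l) (f (x N))
  rw [abs_sub_comm (f l)] at this
  linarith

lemma weakIConv_smul_zero (hI : IsIdeal I) {g : ℕ → ℝ} (hg : ∀ δ > (0 : ℝ), {n | δ ≤ |g n|} ∈ I)
    (v : X) : WeakIConv I (fun n => g n • v) 0 := by
  intro f ε hε
  refine hI.2 _ (hg (ε / (|f v| + 1)) (by positivity)) _ fun n hn => ?_
  simp only [mem_ofPred_eq, map_smul, smul_eq_mul, map_zero, sub_zero, abs_mul] at hn ⊢
  rw [div_le_iff₀ (by positivity)]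
  nlinarith [abs_nonneg (g n)]

lemma WeakCauchyOn.realCauchyOn_of_smul {M : Set ℕ} {g : ℕ → ℝ} {v : X} (hv : v ≠ 0)
    (h : WeakCauchyOn K M fun n => g n • v) : RealCauchyOn K M g := by
  intro ε hε
  obtain ⟨f, -, hfv⟩ := exists_dual_vector ℝ v (norm_ne_zero_iff.mpr hv)
  have hv' : 0 < ‖v‖ := norm_pos_iff.mpr hv
  obtain ⟨N, hN, hS⟩ := h f (ε * ‖v‖) (by positivity)
  refine ⟨N, hN, ?_⟩
  simpa only [map_smul, smul_eq_mul, hfv, RCLike.ofReal_real_eq_id, id, ← sub_mul, abs_mul, abs_norm,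
    mul_le_mul_iff_left₀ hv'] using hS

lemma RealCauchyOn.inter_mem_or_diff_mem {M : Set ℕ} {u : ℕ → ℝ} (hK : IsIdeal K)
    (hu : RealCauchyOn K M u) {S : Set ℕ} {c δ : ℝ} (hδ : 0 < δ) (hS : ∀ m ∈ S, u m = c)
    (hSc : ∀ m ∉ S, δ ≤ |u m - c|) : S ∩ M ∈ K ∨ M \ S ∈ K := by
  obtain ⟨N, -, hN⟩ := hu (δ / 2) (half_pos hδ)
  have hNK := hK.restrictIdeal_subset M hN
  by_cases hc : δ / 2 ≤ |c - u N|
  · refine Or.inl (hK.2 _ hNK _ fun m ⟨hmS, hmM⟩ => ⟨hmM, ?_⟩)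
    rwa [hS m hmS]
  · refine Or.inr (hK.2 _ hNK _ fun m ⟨hmM, hmS⟩ => ⟨hmM, ?_⟩)
    have hgap := hSc m hmS
    have htri := abs_sub_le (u m) (u N) c
    rw [abs_sub_comm (u N)] at htri
    show δ / 2 ≤ |u m - u N|
    linarith

end WeakCauchy

section LevelSeq

variable {A : ℕ → Set ℕ}

lemma inv_succ_mul_succ_le_abs_inv_succ_sub (n j : ℕ) (hne : j ≠ n) :
    ((n + 1 : ℝ) * (n + 2))⁻¹ ≤ |((j : ℝ) + 1)⁻¹ - ((n : ℝ) + 1)⁻¹| := by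
  rw [inv_sub_inv (by positivity) (by positivity), abs_div,
    abs_of_pos (by positivity : (0 : ℝ) < (j + 1) * (n + 1)), ← one_div,
    div_le_div_iff₀ (by positivity) (by positivity), one_mul]
  rcases hne.lt_or_gt with hlt | hgt
  · have : (j : ℝ) + 1 ≤ n := by exact_mod_cast hlt
    rw [abs_of_pos (by linarith)]
    nlinarith [mul_nonneg (sub_nonneg.mpr this) (by positivity : (0 : ℝ) ≤ (n + 1) * (n + 2))]
  · have : (n : ℝ) + 1 ≤ j := by exact_mod_cast hgt
    rw [abs_of_neg (by linarith)]
    nlinarith [mul_nonneg (sub_nonneg.mpr this) (sq_nonneg ((n : ℝ) + 1))]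

/-- Equal to `1/(k+1)` on `A k` when the `A k` are pairwise disjoint, and to `0` off `⋃ k, A k`. -/
noncomputable def levelSeq (A : ℕ → Set ℕ) (n : ℕ) : ℝ :=
  if h : ∃ k, n ∈ A k then ((h.choose : ℝ) + 1)⁻¹ else 0

lemma levelSeq_of_mem (hA : Pairwise (Disjoint on A)) {n k : ℕ} (hn : n ∈ A k) :
    levelSeq A n = ((k : ℝ) + 1)⁻¹ := by
  have hex : ∃ j, n ∈ A j := ⟨k, hn⟩
  have hk : hex.choose = k := by
    by_contra hne
    exact disjoint_left.mp (hA hne) hex.choose_spec hn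
  rw [levelSeq, dif_pos hex, hk]

lemma levelSeq_of_forall_notMem {n : ℕ} (hn : ∀ k, n ∉ A k) : levelSeq A n = 0 := by
  rw [levelSeq, dif_neg (by simpa using hn)]

lemma setOf_le_abs_levelSeq_subset {δ : ℝ} (hδ : 0 < δ) :
    {n | δ ≤ |levelSeq A n|} ⊆ ⋃ k ∈ Finset.range ⌈δ⁻¹⌉₊, A k := by
  intro n hn
  simp only [mem_ofPred_eq, levelSeq] at hn
  split_ifs at hn with hex
  · rw [abs_of_pos (by positivity), le_inv_comm₀ hδ (by positivity)] at hn
    refine mem_biUnion (Finset.mem_range.mpr (Nat.lt_ceil.mpr ?_)) hex.choose_spec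
    linarith
  · rw [abs_zero] at hn
    linarith

lemma setOf_le_abs_levelSeq_mem {I : Set (Set ℕ)} (hI : IsIdeal I) (hAI : ∀ k, A k ∈ I)
    {δ : ℝ} (hδ : 0 < δ) : {n | δ ≤ |levelSeq A n|} ∈ I :=
  hI.2 _ (hI.biUnion_finset_mem (hI.empty_mem_s10 (hAI 0)) hAI _) _ (setOf_le_abs_levelSeq_subset hδ)

lemma le_abs_levelSeq_sub (hA : Pairwise (Disjoint on A)) {m n : ℕ} (hm : m ∉ A n) :
    ((n + 1 : ℝ) * (n + 2))⁻¹ ≤ |levelSeq A m - ((n : ℝ) + 1)⁻¹| := by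
  by_cases hex : ∃ j, m ∈ A j
  · obtain ⟨j, hj⟩ := hex
    rw [levelSeq_of_mem hA hj]
    exact inv_succ_mul_succ_le_abs_inv_succ_sub n j (by rintro rfl; exact hm hj)
  · rw [levelSeq_of_forall_notMem (not_exists.mp hex), zero_sub, abs_neg,
      abs_of_pos (by positivity)]
    exact inv_anti₀ (by positivity) (by nlinarith)

end LevelSeq

section APCondition

variable {I K : Set (Set ℕ)} {A : ℕ → Set ℕ} {M : Set ℕ}

lemma subsingleton_setOf_inter_notMem (hK : IsIdeal K) (hA : Pairwise (Disjoint on A))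
    (hdich : ∀ n, A n ∩ M ∈ K ∨ M \ A n ∈ K) : {n | A n ∩ M ∉ K}.Subsingleton := by
  intro m hm n hn
  by_contra hmn
  have hM : M ∈ K := by
    refine hK.2 _ (hK.1 _ ((hdich m).resolve_left hm) _ ((hdich n).resolve_left hn)) M ?_
    intro k hk
    by_cases hkm : k ∈ A m
    · exact Or.inr ⟨hk, disjoint_left.mp (hA hmn) hkm⟩
    · exact Or.inl ⟨hk, hkm⟩
  exact hm (hK.2 M hM _ inter_subset_right)

lemma apCondition_of_forall_inter_mem_or_diff_mem (hI : IsIdeal I) (hK : IsIdeal K)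
    (hAI : ∀ n, A n ∈ I) (hA : Pairwise (Disjoint on A)) (hM : Mᶜ ∈ I)
    (hdich : ∀ n, A n ∩ M ∈ K ∨ M \ A n ∈ K) :
    ∃ B : ℕ → Set ℕ, (∀ n, B n ∈ I) ∧ (∀ n, symmDiff (A n) (B n) ∈ K) ∧ (⋃ n, B n) ∈ I := by
  have hK₀ : ∅ ∈ K := (hdich 0).elim hK.empty_mem_s10 hK.empty_mem_s10
  have hbad : (⋃ n ∈ {n | A n ∩ M ∉ K}, A n) ∈ I := by
    rcases (subsingleton_setOf_inter_notMem hK hA hdich).eq_empty_or_singleton with h | ⟨n, h⟩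
    · simpa [h] using hI.empty_mem_s10 hM
    · simpa [h] using hAI n
  refine ⟨fun n => if A n ∩ M ∈ K then A n \ M else A n, fun n => ?_, fun n => ?_, ?_⟩
  · dsimp only
    split_ifs
    exacts [hI.2 _ (hAI n) _ sdiff_subset, hAI n]
  · dsimp only
    split_ifs with h
    · convert h using 1
      ext k
      simp only [mem_symmDiff, mem_sdiff, mem_inter_iff]
      tauto
    · rwa [symmDiff_self]
  · refine hI.2 _ (hI.1 _ hM _ hbad) _ (iUnion_subset fun n k hk => ?_)
    split_ifs at hk with h
    · exact Or.inl hk.2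
    · exact Or.inr (mem_biUnion h hk)

end APCondition

theorem stmt10 {X : Type*} [NormedAddCommGroup X] [NormedSpace ℝ X] [Nontrivial X]
    (I K : Set (Set ℕ)) (hI : IsIdeal I) (hK : IsIdeal K)
    (h : ∀ x : ℕ → X, WeakICauchy I x → WeakIKCauchy I K x) :
    APCondition I K := by
  intro A hAI hA
  obtain ⟨v, hv⟩ := exists_ne (0 : X)
  have hconv : WeakIConv I (fun n => levelSeq A n • v) 0 :=
    weakIConv_smul_zero hI (fun δ hδ => setOf_le_abs_levelSeq_mem hI hAI hδ) v
  obtain ⟨M, hMc, hM⟩ := h _ (hconv.weakICauchy hI)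
  have hg : RealCauchyOn K M (levelSeq A) := hM.realCauchyOn_of_smul hv
  refine apCondition_of_forall_inter_mem_or_diff_mem hI hK hAI hA hMc fun n => ?_
  exact hg.inter_mem_or_diff_mem hK (by positivity) (fun m hm => levelSeq_of_mem hA hm)
    (fun m hm => le_abs_levelSeq_sub hA hm)
end

section
/- Let X be a reflexive real Banach space with dual X* and I, K ideals on ℕ. If a sequence (fₙ) in X* is weak* I^K-Cauchy, then it is weak I^K-Cauchy (as a sequence in the normed space X*). -/
open NormedSpace Classical

/-- The sequence of functionals `f` restricted to `M` is weak* `K|_M`-Cauchy. -/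
def WeakStarCauchyOn {X : Type*} [NormedAddCommGroup X] [NormedSpace ℝ X]
    (K : Set (Set ℕ)) (M : Set ℕ) (f : ℕ → StrongDual ℝ X) : Prop :=
  ∀ ε > (0 : ℝ), ∀ x : X, ∃ N ∈ M,
    {n ∈ M | ε ≤ |f n x - f N x|} ∈ restrictIdeal K M

/-- A sequence of functionals `f` is weak* `I^K`-Cauchy. -/
def WeakStarIKCauchy {X : Type*} [NormedAddCommGroup X] [NormedSpace ℝ X]
    (I K : Set (Set ℕ)) (f : ℕ → StrongDual ℝ X) : Prop :=
  ∃ M : Set ℕ, Mᶜ ∈ I ∧ WeakStarCauchyOn K M f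

theorem WeakStarCauchyOn.weakCauchyOn {X : Type*} [NormedAddCommGroup X] [NormedSpace ℝ X]
    (hrefl : Function.Surjective (inclusionInDoubleDual ℝ X)) {K : Set (Set ℕ)} {M : Set ℕ}
    {f : ℕ → StrongDual ℝ X} (h : WeakStarCauchyOn K M f) : WeakCauchyOn K M f := by
  intro g ε hε
  obtain ⟨x, rfl⟩ := hrefl g
  simpa only [dual_def] using h ε hε x

theorem stmt15_general {X : Type*} [NormedAddCommGroup X] [NormedSpace ℝ X]
    (hrefl : Function.Surjective (NormedSpace.inclusionInDoubleDual ℝ X))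
    (I K : Set (Set ℕ)) (f : ℕ → StrongDual ℝ X)
    (h : WeakStarIKCauchy I K f) : WeakIKCauchy I K f := by
  obtain ⟨M, hM, hCauchy⟩ := h
  exact ⟨M, hM, hCauchy.weakCauchyOn hrefl⟩

theorem stmt15 {X : Type*} [NormedAddCommGroup X] [NormedSpace ℝ X] [CompleteSpace X]
    (hrefl : Function.Surjective (NormedSpace.inclusionInDoubleDual ℝ X))
    (I K : Set (Set ℕ)) (hI : IsIdeal I) (hK : IsIdeal K) (f : ℕ → StrongDual ℝ X)
    (h : WeakStarIKCauchy I K f) : WeakIKCauchy I K f :=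
  stmt15_general hrefl I K f h
end
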